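/- Let T > 0 and a ≥ 0 be real numbers. Suppose h : ℝ → ℝ is continuous on the closed interval [0, T], differentiable at every point of [0, T], and satisfies h(0) ≥ a together with deriv h t ≥ (h t)^2 − a^2 for every t ∈ [0, T]. Then h is monotone nondecreasing on [0, T], i.e., MonotoneOn h (Set.Icc 0 T). -/
import Mathlib


/-- Scalar analytic core of Lemma 1: a Riccati-type differential inequality
`h' ≥ h² − a²` with `h 0 ≥ a ≥ 0` forces `h` to be nondecreasing on `[0, T]`. -/
theorem riccati_ineq_monotoneOn (T a : ℝ) (hT : 0 < T) (ha : 0 ≤ a) (h : ℝ → ℝ)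
    (hcont : ContinuousOn h (Set.Icc 0 T))
    (hdiff : ∀ t ∈ Set.Icc 0 T, DifferentiableAt ℝ h t)
    (h0 : a ≤ h 0)
    (hineq : ∀ t ∈ Set.Icc 0 T, (h t) ^ 2 - a ^ 2 ≤ deriv h t) :
    MonotoneOn h (Set.Icc 0 T) := by
  set g : ℝ → ℝ := fun t => (a - h t) * Real.exp (-(2 * a) * t) with hg
  have hder : ∀ t ∈ Set.Icc 0 T, HasDerivAt g
      (-(deriv h t) * Real.exp (-(2 * a) * t)
        + (a - h t) * (Real.exp (-(2 * a) * t) * (-(2 * a)))) t := by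
    intro t ht
    have H1 : HasDerivAt (fun t => a - h t) (-(deriv h t)) t :=
      ((hdiff t ht).hasDerivAt).const_sub a
    have H2 : HasDerivAt (fun t => Real.exp (-(2 * a) * t))
        (Real.exp (-(2 * a) * t) * (-(2 * a))) t := by
      have : HasDerivAt (fun t : ℝ => -(2 * a) * t) (-(2 * a)) t := by
        simpa using (hasDerivAt_id t).const_mul (-(2 * a))
      exact this.exp
    exact H1.mul H2
  have hgcont : ContinuousOn g (Set.Icc 0 T) := by
    apply (continuousOn_const.sub hcont).mul
    exact ((Real.continuous_exp.comp (continuous_const.mul continuous_id)).continuousOn)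
  have hanti : AntitoneOn g (Set.Icc 0 T) := by
    apply antitoneOn_of_deriv_nonpos (convex_Icc 0 T) hgcont
    · intro t ht
      rw [interior_Icc] at ht
      exact (hder t (Set.mem_Icc_of_Ioo ht)).differentiableAt.differentiableWithinAt
    · intro t ht
      rw [interior_Icc] at ht
      have ht' : t ∈ Set.Icc 0 T := Set.mem_Icc_of_Ioo ht
      rw [(hder t ht').deriv]
      have h1 := hineq t ht'
      have h2 := Real.exp_pos (-(2 * a) * t)
      nlinarith [mul_le_mul_of_nonneg_right h1 h2.le, mul_nonneg h2.le (sq_nonneg (h t - a))]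
  have hge : ∀ t ∈ Set.Icc 0 T, a ≤ h t := by
    intro t ht
    have h0mem : (0 : ℝ) ∈ Set.Icc 0 T := Set.mem_Icc.2 ⟨le_refl 0, hT.le⟩
    have := hanti h0mem ht ht.1
    have hg0 : g 0 ≤ 0 := by
      simp only [hg, mul_zero, neg_zero, Real.exp_zero, mul_one]
      linarith
    have : g t ≤ 0 := le_trans this hg0
    have h2 := Real.exp_pos (-(2 * a) * t)
    have hgt : (a - h t) * Real.exp (-(2 * a) * t) ≤ 0 := this
    by_contra hc
    push_neg at hc
    nlinarith [mul_pos (sub_pos.2 hc) h2]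
  apply monotoneOn_of_deriv_nonneg (convex_Icc 0 T) hcont
  · intro t ht
    rw [interior_Icc] at ht
    exact (hdiff t (Set.mem_Icc_of_Ioo ht)).differentiableWithinAt
  · intro t ht
    rw [interior_Icc] at ht
    have ht' : t ∈ Set.Icc 0 T := Set.mem_Icc_of_Ioo ht
    have h1 := hineq t ht'
    have h2 := hge t ht'
    nlinarith
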